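/- Let c ∈ ℝ, T > 0, and α : ℝ → ℝ be T-periodic and essentially bounded with α(t) ≫ 0 (i.e., α(t) ≥ 0 a.e. and α(t) > 0 on a positive-measure set) and α(t) ≪ (2π)²/T² + c²/4. Then x'' + c x' + α(t) x = 0 has no nontrivial T-periodic solution. -/

import Mathlib

/-!
The substitution `y t = exp (c t / 2) * x t` removes the damping:
`y'' + (α - c² / 4) y = 0` and `y (t + T) = exp (c T / 2) * y t`.

A solution without zeros keeps one sign, and integrating `x'' + c x' = -α x` over a period
gives `∫ α x = 0`, impossible when `α ≫ 0`. So `x` vanishes at some `a`, and the zero is simple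
by uniqueness for the linear equation. Comparing `y` with `sin (ω (t - a))`, `ω = 2π / T`,
through their Wronskian shows, since `α - c² / 4 ≤ ω²`, that consecutive zeros of `y` are at
least `π / ω = T / 2` apart, with equality only if `α - c² / 4 = ω²` a.e. in between. The sign
changes at `a < b < d ≤ a + T` thus force `α = ω² + c² / 4` a.e. on a full period, which
contradicts `α ≪ ω² + c² / 4`.
-/

open Real MeasureTheory Set Topology

theorem le_on_open_of_ae_le {X : Type*} [TopologicalSpace X] [MeasurableSpace X]
    [OpensMeasurableSpace X] {μ : Measure X} [μ.IsOpenPosMeasure] {f g : X → ℝ}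
    (hf : Continuous f) (hg : Continuous g) {U : Set X} (hU : IsOpen U)
    (h : ∀ᵐ t ∂μ, t ∈ U → f t ≤ g t) : ∀ t ∈ U, f t ≤ g t := by
  have hmin : (fun t => min (f t) (g t)) =ᵐ[μ.restrict U] f :=
    (ae_restrict_iff' hU.measurableSet).2 (h.mono fun t ht htU => min_eq_left (ht htU))
  exact fun t ht => min_eq_left_iff.mp
    (Measure.eqOn_open_of_ae_eq hmin hU (hf.min hg).continuousOn hf.continuousOn ht)

theorem le_of_ae_le {X : Type*} [TopologicalSpace X] [MeasurableSpace X]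
    [OpensMeasurableSpace X] {μ : Measure X} [μ.IsOpenPosMeasure] {f g : X → ℝ}
    (hf : Continuous f) (hg : Continuous g) (h : ∀ᵐ t ∂μ, f t ≤ g t) : ∀ t, f t ≤ g t :=
  fun t => le_on_open_of_ae_le hf hg isOpen_univ (h.mono fun _ ht _ => ht) t trivial

theorem eq_zero_of_norm_deriv_le_of_le {E : Type*} [NormedAddCommGroup E] [NormedSpace ℝ E]
    {f : ℝ → E} {K : ℝ} (hf : Differentiable ℝ f) (hK : ∀ t, ‖deriv f t‖ ≤ K * ‖f t‖)
    {r : ℝ} (hr : f r = 0) {t : ℝ} (hrt : r ≤ t) : f t = 0 := by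
  have := norm_le_gronwallBound_of_norm_deriv_right_le (δ := 0) (ε := 0)
    hf.continuous.continuousOn (fun s _ => (hf s).hasDerivAt.hasDerivWithinAt) (by simp [hr])
    (fun s _ => by simpa using hK s) t ⟨hrt, le_rfl⟩
  simpa [gronwallBound_ε0_δ0] using this

theorem eq_zero_of_norm_deriv_le {E : Type*} [NormedAddCommGroup E] [NormedSpace ℝ E]
    {f : ℝ → E} {K : ℝ} (hf : Differentiable ℝ f) (hK : ∀ t, ‖deriv f t‖ ≤ K * ‖f t‖)
    {r : ℝ} (hr : f r = 0) (t : ℝ) : f t = 0 := by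
  rcases le_total r t with hrt | htr
  · exact eq_zero_of_norm_deriv_le_of_le hf hK hr hrt
  · have hg : Differentiable ℝ (fun s => f (-s)) := hf.comp differentiable_neg
    have hgK : ∀ s, ‖deriv (fun s => f (-s)) s‖ ≤ K * ‖f (-s)‖ := fun s => by
      simpa [deriv_comp_neg] using hK (-s)
    simpa using eq_zero_of_norm_deriv_le_of_le hg hgK (r := -r) (by simpa using hr)
      (neg_le_neg htr)

theorem Function.Periodic.deriv {𝕜 F : Type*} [NontriviallyNormedField 𝕜]
    [NormedAddCommGroup F] [NormedSpace 𝕜 F] {f : 𝕜 → F} {T : 𝕜} (h : Function.Periodic f T) :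
    Function.Periodic (deriv f) T := fun t => by
  rw [← deriv_comp_add_const, funext h]

theorem exists_first_zero {f : ℝ → ℝ} (hf : Continuous f) {p q : ℝ} (hpq : p < q)
    (hp : f p = 0) (hp' : 0 < deriv f p) (hq : f q = 0) :
    ∃ b ∈ Ioc p q, f b = 0 ∧ (∀ t ∈ Ioo p b, 0 < f t) ∧ deriv f b ≤ 0 := by
  have hright : ∀ᶠ t in 𝓝[>] p, 0 < f t := by
    filter_upwards [nhdsWithin_le_nhds (eventually_nhdsWithin_sign_eq_of_deriv_pos hp' hp),
      self_mem_nhdsWithin] with t ht htp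
    rwa [sign_pos (sub_pos.2 htp), sign_eq_one_iff] at ht
  obtain ⟨e, hpe, hepos⟩ := mem_nhdsGT_iff_exists_Ioc_subset.1 hright
  have heq : e < q := lt_of_not_ge fun hqe => (hepos ⟨hpq, hqe⟩ : 0 < f q).ne' hq
  set Z := {t ∈ Icc e q | f t = 0}
  have hZ : IsClosed Z := isClosed_Icc.inter (isClosed_eq hf continuous_const)
  have hZne : Z.Nonempty := ⟨q, ⟨heq.le, le_rfl⟩, hq⟩
  have hZbdd : BddBelow Z := ⟨e, fun t ht => ht.1.1⟩
  obtain ⟨⟨heb, hbq⟩, hb⟩ : sInf Z ∈ Z := hZ.csInf_mem hZne hZbdd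
  have hpb : p < sInf Z := lt_of_lt_of_le hpe heb
  have hpos : ∀ t ∈ Ioo p (sInf Z), 0 < f t := by
    rintro t ⟨hpt, htb⟩
    rcases le_or_gt t e with hte | het
    · exact hepos ⟨hpt, hte⟩
    by_contra! hft
    obtain ⟨z, ⟨hez, hzt⟩, hz⟩ := intermediate_value_Icc' het.le hf.continuousOn
      ⟨hft, (hepos ⟨hpe, le_rfl⟩).le⟩
    exact (csInf_le hZbdd ⟨⟨hez, hzt.trans (htb.le.trans hbq)⟩, hz⟩).not_gt
      (hzt.trans_lt htb)
  refine ⟨sInf Z, ⟨hpb, hbq⟩, hb, hpos, ?_⟩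
  by_contra! hb'
  have hleft : ∀ᶠ t in 𝓝[<] sInf Z, f t < 0 := by
    filter_upwards [nhdsWithin_le_nhds (eventually_nhdsWithin_sign_eq_of_deriv_pos hb' hb),
      self_mem_nhdsWithin] with t ht htb
    rwa [sign_neg (sub_neg.2 htb), sign_eq_neg_one_iff] at ht
  obtain ⟨t, hft, htp⟩ := (hleft.and (Ioo_mem_nhdsLT hpb)).exists
  exact (hpos t htp).not_gt hft

theorem measure_pos_Ioc_of_periodic {p : ℝ → Prop} {T a : ℝ} (hp : ∀ t, p t → p (t + T))
    (ha : a ∈ Ico 0 T) (h : 0 < volume {t ∈ Icc 0 T | p t}) :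
    0 < volume {t ∈ Ioc a (a + T) | p t} := by
  set S := {t ∈ Ioc a (a + T) | p t}
  have hsub : {t ∈ Icc 0 T | p t} ⊆ S ∪ (· + T) ⁻¹' S := by
    rintro t ⟨⟨h0, hT⟩, hpt⟩
    rcases lt_or_ge a t with hat | hta
    · exact Or.inl ⟨⟨hat, by linarith [ha.1]⟩, hpt⟩
    · exact Or.inr ⟨⟨by linarith [ha.2], by linarith⟩, hp t hpt⟩
  refine pos_of_ne_zero fun hS => h.ne' (measure_mono_null hsub ?_)
  rw [measure_union_null_iff, measure_preimage_add_right]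
  exact ⟨hS, hS⟩

section Hill

variable {q y : ℝ → ℝ} {ω a b L : ℝ}

theorem eq_zero_of_hill {M : ℝ} (hy : ContDiff ℝ 2 y)
    (hode : ∀ᵐ t, deriv (deriv y) t + q t * y t = 0) (hq : ∀ᵐ t, |q t| ≤ M)
    {r : ℝ} (hr : y r = 0) (hr' : deriv y r = 0) (t : ℝ) : y t = 0 := by
  have hy' : ContDiff ℝ 1 (deriv y) := hy.deriv'
  have hd : Differentiable ℝ y := hy.differentiable two_ne_zero
  have hd' : Differentiable ℝ (deriv y) := hy'.differentiable one_ne_zero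
  have hbound : ∀ t, |deriv (deriv y) t| ≤ M * |y t| := by
    refine le_of_ae_le (μ := volume) (hy'.continuous_deriv le_rfl).abs
      (continuous_const.mul hd.continuous.abs) ?_
    filter_upwards [hode, hq] with t hode hq
    rw [show deriv (deriv y) t = -(q t * y t) by linarith, abs_neg, abs_mul]
    exact mul_le_mul_of_nonneg_right hq (abs_nonneg _)
  have hderiv : ∀ t, deriv (fun t => (y t, deriv y t)) t = (deriv y t, deriv (deriv y) t) :=
    fun t => ((hd t).hasDerivAt.prodMk (hd' t).hasDerivAt).deriv
  have hK : ∀ t, ‖deriv (fun t => (y t, deriv y t)) t‖ ≤ max 1 M * ‖(y t, deriv y t)‖ := by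
    intro t
    rw [hderiv, Prod.norm_def, Prod.norm_def, max_le_iff]
    simp only [Real.norm_eq_abs]
    constructor
    · nlinarith [le_max_left 1 M, le_max_right |y t| |deriv y t|, abs_nonneg (deriv y t)]
    · nlinarith [hbound t, le_max_left 1 M, le_max_right 1 M, le_max_left |y t| |deriv y t|,
        abs_nonneg (y t)]
  have := eq_zero_of_norm_deriv_le (hd.prodMk hd') hK (r := r) (by simp [hr, hr']) t
  exact (Prod.ext_iff.mp this).1

theorem ae_hill_neg (hode : ∀ᵐ t, deriv (deriv y) t + q t * y t = 0) :
    ∀ᵐ t, deriv (deriv (-y)) t + q t * (-y) t = 0 := by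
  filter_upwards [hode] with t hode
  simp only [deriv.neg', deriv.fun_neg', mul_neg, Pi.neg_apply]
  linarith

noncomputable def sinWronskian (y : ℝ → ℝ) (ω a t : ℝ) : ℝ :=
  deriv y t * sin (ω * (t - a)) - y t * (ω * cos (ω * (t - a)))

theorem hasDerivAt_sinWronskian (hy : ContDiff ℝ 2 y) (t : ℝ) :
    HasDerivAt (sinWronskian y ω a)
      ((deriv (deriv y) t + ω ^ 2 * y t) * sin (ω * (t - a))) t := by
  have hy' : ContDiff ℝ 1 (deriv y) := hy.deriv'
  have hlin : HasDerivAt (fun t => ω * (t - a)) ω t := by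
    simpa using ((hasDerivAt_id t).sub_const a).const_mul ω
  have := ((hy'.differentiable one_ne_zero t).hasDerivAt.mul hlin.sin).sub
    ((hy.differentiable two_ne_zero t).hasDerivAt.mul (hlin.cos.const_mul ω))
  exact this.congr_deriv (by ring)

theorem sin_mul_sub_nonneg_of_mem_Ioo (hω : 0 ≤ ω) (hlen : ω * (b - a) ≤ π) {t : ℝ}
    (ht : t ∈ Ioo a b) : 0 ≤ sin (ω * (t - a)) :=
  sin_nonneg_of_nonneg_of_le_pi (mul_nonneg hω (by linarith [ht.1]))
    (le_trans (mul_le_mul_of_nonneg_left (by linarith [ht.2]) hω) hlen)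

section Sturm

variable (hy : ContDiff ℝ 2 y) (hode : ∀ᵐ t, deriv (deriv y) t + q t * y t = 0)
  (hq : ∀ᵐ t, q t ≤ ω ^ 2)
include hy hode hq

theorem monotoneOn_sinWronskian (hω : 0 ≤ ω) (hlen : ω * (b - a) ≤ π)
    (hnn : ∀ t ∈ Ioo a b, 0 ≤ y t) : MonotoneOn (sinWronskian y ω a) (Icc a b) := by
  have hy' : ContDiff ℝ 1 (deriv y) := hy.deriv'
  have hcomp : ∀ t ∈ Ioo a b, 0 ≤ deriv (deriv y) t + ω ^ 2 * y t := by
    refine le_on_open_of_ae_le (μ := volume) (g := fun t => deriv (deriv y) t + ω ^ 2 * y t)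
      continuous_const ((hy'.continuous_deriv le_rfl).add
      (continuous_const.mul hy.continuous)) isOpen_Ioo ?_
    filter_upwards [hode, hq] with t hode hq ht
    nlinarith [hnn t ht]
  refine monotoneOn_of_deriv_nonneg (convex_Icc a b)
    (fun t _ => (hasDerivAt_sinWronskian hy t).continuousAt.continuousWithinAt)
    (fun t _ => (hasDerivAt_sinWronskian hy t).differentiableAt.differentiableWithinAt) ?_
  intro t ht
  rw [interior_Icc] at ht
  rw [(hasDerivAt_sinWronskian hy t).deriv]
  exact mul_nonneg (hcomp t ht) (sin_mul_sub_nonneg_of_mem_Ioo hω hlen ht)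

theorem pi_le_mul_sub_of_zeros (hω : 0 < ω) (hab : a < b) (hya : y a = 0) (hyb : y b = 0)
    (hnn : ∀ t ∈ Ioo a b, 0 ≤ y t) (hyb' : deriv y b < 0) : π ≤ ω * (b - a) := by
  by_contra! hlt
  have hmono := monotoneOn_sinWronskian hy hode hq hω.le hlt.le hnn
    (left_mem_Icc.2 hab.le) (right_mem_Icc.2 hab.le) hab.le
  have hsin : 0 < sin (ω * (b - a)) := sin_pos_of_pos_of_lt_pi (by nlinarith) hlt
  simp only [sinWronskian, hya, hyb, sub_self, mul_zero, sin_zero, zero_mul] at hmono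
  nlinarith

theorem ae_eq_sq_of_mul_sub_eq_pi (hω : 0 < ω) (hya : y a = 0) (hyb : y b = 0)
    (hpos : ∀ t ∈ Ioo a b, 0 < y t) (hlen : ω * (b - a) = π) :
    ∀ᵐ t, t ∈ Ioo a b → q t = ω ^ 2 := by
  have hab : a ≤ b := by nlinarith [pi_pos]
  have hmono := monotoneOn_sinWronskian hy hode hq hω.le hlen.le fun t ht => (hpos t ht).le
  have hwa : sinWronskian y ω a a = 0 := by simp [sinWronskian, hya]
  have hwb : sinWronskian y ω a b = 0 := by simp [sinWronskian, hyb, hlen]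
  have hw : ∀ t ∈ Ioo a b, deriv (deriv y) t + ω ^ 2 * y t = 0 := by
    intro t ht
    have hzero : sinWronskian y ω a =ᶠ[𝓝 t] fun _ => 0 := by
      filter_upwards [isOpen_Ioo.mem_nhds ht] with s hs
      have hs' := Ioo_subset_Icc_self hs
      exact le_antisymm (hwb ▸ hmono hs' (right_mem_Icc.2 hab) hs'.2)
        (hwa ▸ hmono (left_mem_Icc.2 hab) hs' hs'.1)
    have hsin : 0 < sin (ω * (t - a)) :=
      sin_pos_of_pos_of_lt_pi (mul_pos hω (by linarith [ht.1]))
        (hlen ▸ mul_lt_mul_of_pos_left (by linarith [ht.2]) hω)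
    have := (hasDerivAt_sinWronskian hy t).unique
      ((hasDerivAt_const t 0).congr_of_eventuallyEq hzero)
    exact (mul_eq_zero.1 this).resolve_right hsin.ne'
  filter_upwards [hode] with t hode ht
  have := hw t ht
  nlinarith [hpos t ht]

end Sturm

section Floquet

variable (hω : 0 < ω) (hy : ContDiff ℝ 2 y) (hode : ∀ᵐ t, deriv (deriv y) t + q t * y t = 0)
  (hq : ∀ᵐ t, q t ≤ ω ^ 2) (hL : ω * L = 2 * π)
include hω hy hode hq hL

theorem ae_eq_sq_of_upcrossing_zeros (hsimple : ∀ t, y t = 0 → deriv y t ≠ 0)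
    (ha : y a = 0) (ha' : 0 < deriv y a) (haL : y (a + L) = 0) (haL' : 0 < deriv y (a + L)) :
    ∀ᵐ t, t ∈ Ioc a (a + L) → q t = ω ^ 2 := by
  have hL0 : 0 < L := by nlinarith [pi_pos]
  obtain ⟨b, ⟨hab, hbL⟩, hb, hpos, hb'⟩ :=
    exists_first_zero hy.continuous (by linarith) ha ha' haL
  have hb'lt : deriv y b < 0 := hb'.lt_of_ne (hsimple b hb)
  have hbL' : b < a + L := hbL.lt_of_ne (by rintro rfl; linarith)
  have hyn : ContDiff ℝ 2 (-y) := hy.neg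
  have hoden := ae_hill_neg hode
  obtain ⟨d, ⟨hbd, hdL⟩, hd, hposn, hd'⟩ :=
    exists_first_zero hyn.continuous hbL' (by simp [hb]) (by simpa using hb'lt) (by simp [haL])
  have hd'lt : deriv (-y) d < 0 := hd'.lt_of_ne (by simpa using hsimple d (by simpa using hd))
  have h₁ := pi_le_mul_sub_of_zeros hy hode hq hω hab ha hb (fun t ht => (hpos t ht).le) hb'lt
  have h₂ := pi_le_mul_sub_of_zeros hyn hoden hq hω hbd (by simp [hb]) hd
    (fun t ht => (hposn t ht).le) hd'lt
  have hdL' : d = a + L := by nlinarith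
  subst hdL'
  filter_upwards [ae_eq_sq_of_mul_sub_eq_pi hy hode hq hω ha hb hpos (by nlinarith),
    ae_eq_sq_of_mul_sub_eq_pi hyn hoden hq hω (by simp [hb]) hd hposn (by nlinarith),
    volume.ae_ne b, volume.ae_ne (a + L)] with t h₁ h₂ htb htL ht
  rcases htb.lt_or_gt with htb | htb
  · exact h₁ ⟨ht.1, htb⟩
  · exact h₂ ⟨htb, ht.2.lt_of_ne htL⟩

theorem ae_eq_sq_of_floquet {M μ : ℝ} (hqM : ∀ᵐ t, |q t| ≤ M) (hμ : 0 < μ)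
    (hfloquet : ∀ t, y (t + L) = μ * y t) (hne : ∃ t, y t ≠ 0) (ha : y a = 0) :
    ∀ᵐ t, t ∈ Ioc a (a + L) → q t = ω ^ 2 := by
  have hsimple : ∀ t, y t = 0 → deriv y t ≠ 0 := fun r hr hr' => by
    obtain ⟨t, ht⟩ := hne
    exact ht (eq_zero_of_hill hy hode hqM hr hr' t)
  have hfloquet' : ∀ t, deriv y (t + L) = μ * deriv y t := fun t => by
    rw [← deriv_comp_add_const, funext hfloquet,
      deriv_const_mul μ ((hy.differentiable two_ne_zero) t)]
  wlog ha' : 0 < deriv y a generalizing y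
  · refine this (hy := hy.neg) (ae_hill_neg hode) (fun t => by simp [hfloquet t])
      (by simpa using hne) (by simp [ha]) (fun t ht => by simpa using hsimple t (by simpa using ht))
      (fun t => by simp [hfloquet' t]) ?_
    simpa using (hsimple a ha).lt_of_le (not_lt.1 ha')
  exact ae_eq_sq_of_upcrossing_zeros hω hy hode hq hL hsimple ha ha' (by simp [hfloquet, ha])
    (by rw [hfloquet']; positivity)

end Floquet

end Hill

theorem deriv_exp_mul_mul (k : ℝ) {x : ℝ → ℝ} (hx : Differentiable ℝ x) :
    deriv (fun t => exp (k * t) * x t) = fun t => exp (k * t) * (k * x t + deriv x t) := by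
  funext t
  have hexp : HasDerivAt (fun t => exp (k * t)) (exp (k * t) * k) t := by
    simpa using ((hasDerivAt_id t).const_mul k).exp
  exact (hexp.mul (hx t).hasDerivAt).deriv.trans (by ring)

theorem deriv_deriv_exp_mul_mul (k : ℝ) {x : ℝ → ℝ} (hx : ContDiff ℝ 2 x) (t : ℝ) :
    deriv (deriv fun t => exp (k * t) * x t) t =
      exp (k * t) * (deriv (deriv x) t + 2 * k * deriv x t + k ^ 2 * x t) := by
  have hx' : ContDiff ℝ 1 (deriv x) := hx.deriv'
  have hd : Differentiable ℝ x := hx.differentiable two_ne_zero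
  have hd' : Differentiable ℝ (deriv x) := hx'.differentiable one_ne_zero
  have hg : Differentiable ℝ (fun t => k * x t + deriv x t) := (hd.const_mul k).add hd'
  have hg' : HasDerivAt (fun t => k * x t + deriv x t) (k * deriv x t + deriv (deriv x) t) t :=
    ((hd t).hasDerivAt.const_mul k).add (hd' t).hasDerivAt
  rw [deriv_exp_mul_mul k hd, deriv_exp_mul_mul k hg]
  beta_reduce
  rw [hg'.deriv]
  ring

section Damped

variable {c T : ℝ} {α x : ℝ → ℝ}

theorem ae_damped_neg (hode : ∀ᵐ t, deriv (deriv x) t + c * deriv x t + α t * x t = 0) :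
    ∀ᵐ t, deriv (deriv (-x)) t + c * deriv (-x) t + α t * (-x) t = 0 := by
  filter_upwards [hode] with t hode
  simp only [deriv.neg', deriv.fun_neg', mul_neg, Pi.neg_apply]
  linarith

theorem not_forall_pos_of_periodic_solution (hT : 0 < T) (hlb : ∀ᵐ t, 0 ≤ α t)
    (hlbstrict : 0 < volume {t ∈ Icc (0 : ℝ) T | 0 < α t}) (hx : ContDiff ℝ 2 x)
    (hxper : Function.Periodic x T)
    (hode : ∀ᵐ t, deriv (deriv x) t + c * deriv x t + α t * x t = 0) : ¬ ∀ t, 0 < x t := by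
  intro hpos
  have hx' : ContDiff ℝ 1 (deriv x) := hx.deriv'
  set h := fun t => -(deriv (deriv x) t + c * deriv x t)
  have hh : Continuous h :=
    ((hx'.continuous_deriv le_rfl).add (continuous_const.mul hx'.continuous)).neg
  have hnonneg : ∀ t, 0 ≤ h t := le_of_ae_le (μ := volume) continuous_const hh <| by
    filter_upwards [hode, hlb] with t hode hlb
    nlinarith [hpos t]
  have hint : ∫ t in 0..T, h t = 0 := by
    have hF : ∀ t, HasDerivAt (fun t => -(deriv x t + c * x t)) (h t) t := fun t =>
      (((hx'.differentiable one_ne_zero t).hasDerivAt).add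
        (((hx.differentiable two_ne_zero t).hasDerivAt).const_mul c)).neg
    rw [intervalIntegral.integral_eq_sub_of_hasDerivAt (fun t _ => hF t)
      (hh.intervalIntegrable _ _)]
    have hx0 : x T = x 0 := by simpa using hxper 0
    have hx'0 : deriv x T = deriv x 0 := by simpa using hxper.deriv 0
    simp [hx0, hx'0]
  obtain ⟨t₀, ⟨ht₀, hαt₀⟩, hodet₀⟩ :=
    Measure.exists_mem_of_measure_ne_zero_of_ae hlbstrict.ne' (ae_restrict_of_ae hode)
  have := intervalIntegral.integral_lt_integral_of_continuousOn_of_le_of_exists_lt hT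
    continuousOn_const hh.continuousOn (fun t _ => hnonneg t)
    ⟨t₀, ht₀, by nlinarith [mul_pos hαt₀ (hpos t₀)]⟩
  simp only [intervalIntegral.integral_const, smul_zero] at this
  exact this.ne' hint

theorem exists_zero_of_periodic_solution (hT : 0 < T) (hlb : ∀ᵐ t, 0 ≤ α t)
    (hlbstrict : 0 < volume {t ∈ Icc (0 : ℝ) T | 0 < α t}) (hx : ContDiff ℝ 2 x)
    (hxper : Function.Periodic x T)
    (hode : ∀ᵐ t, deriv (deriv x) t + c * deriv x t + α t * x t = 0) (hne : ∃ t, x t ≠ 0) :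
    ∃ t, x t = 0 := by
  by_contra! hzero
  obtain ⟨t₀, ht₀⟩ := hne
  have hsign : ∀ t, 0 < x t * x t₀ := fun t => by
    by_contra! hle
    have h0 : (0 : ℝ) ∈ uIcc (x t) (x t₀) := by
      rcases (hzero t).lt_or_gt with h | h
      · exact mem_uIcc.2 (Or.inl ⟨h.le, by nlinarith⟩)
      · exact mem_uIcc.2 (Or.inr ⟨by nlinarith, h.le⟩)
    obtain ⟨z, -, hz⟩ := intermediate_value_uIcc hx.continuous.continuousOn h0
    exact hzero z hz
  rcases ht₀.lt_or_gt with hneg | hpos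
  · exact not_forall_pos_of_periodic_solution hT hlb hlbstrict hx.neg (fun t => by simp [hxper t])
      (ae_damped_neg hode) fun t => by nlinarith [hsign t]
  · exact not_forall_pos_of_periodic_solution hT hlb hlbstrict hx hxper hode
      fun t => by nlinarith [hsign t]

theorem ae_eq_of_periodic_solution_of_zero (hT : 0 < T) {C : ℝ} (hbdd : ∀ᵐ t, |α t| ≤ C)
    (hub : ∀ᵐ t, α t ≤ (2 * π) ^ 2 / T ^ 2 + c ^ 2 / 4) (hx : ContDiff ℝ 2 x)
    (hxper : Function.Periodic x T)
    (hode : ∀ᵐ t, deriv (deriv x) t + c * deriv x t + α t * x t = 0) (hne : ∃ t, x t ≠ 0)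
    {a : ℝ} (ha : x a = 0) :
    ∀ᵐ t, t ∈ Ioc a (a + T) → α t = (2 * π) ^ 2 / T ^ 2 + c ^ 2 / 4 := by
  set y := fun t => exp (c / 2 * t) * x t
  have hy : ContDiff ℝ 2 y := (contDiff_exp.comp (contDiff_const.mul contDiff_id)).mul hx
  have hode_y : ∀ᵐ t, deriv (deriv y) t + (α t - c ^ 2 / 4) * y t = 0 := by
    filter_upwards [hode] with t hode
    rw [deriv_deriv_exp_mul_mul _ hx]
    linear_combination exp (c / 2 * t) * hode
  have hsq : (2 * π / T) ^ 2 = (2 * π) ^ 2 / T ^ 2 := div_pow _ _ _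
  have hfloquet : ∀ t, y (t + T) = exp (c / 2 * T) * y t := fun t => by
    simp only [y, hxper t, mul_add, exp_add]
    ring
  have := ae_eq_sq_of_floquet (q := fun t => α t - c ^ 2 / 4) (ω := 2 * π / T) (a := a) (L := T)
    (M := C + c ^ 2 / 4) (by positivity) hy hode_y (by filter_upwards [hub] with t ht; linarith)
    (by field_simp)
    (by
      filter_upwards [hbdd] with t ht
      exact (abs_sub _ _).trans <| by
        rw [abs_of_nonneg (by positivity : (0 : ℝ) ≤ c ^ 2 / 4)]
        linarith)
    (exp_pos _) hfloquet (hne.imp fun t ht => by simpa [y] using ht) (by simp [y, ha])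
  filter_upwards [this] with t ht hmem
  linarith [ht hmem]

end Damped

theorem stmt3_general (c T : ℝ) (hT : 0 < T) (α : ℝ → ℝ)
    (hper : Function.Periodic α T)
    (hbdd : ∃ C : ℝ, ∀ᵐ t ∂(volume : Measure ℝ), |α t| ≤ C)
    (hlb : ∀ᵐ t ∂(volume : Measure ℝ), 0 ≤ α t)
    (hlbstrict : 0 < volume {t ∈ Icc (0 : ℝ) T | 0 < α t})
    (hub : ∀ᵐ t ∂(volume : Measure ℝ), α t ≤ (2 * π) ^ 2 / T ^ 2 + c ^ 2 / 4)
    (hubstrict : 0 < volume {t ∈ Icc (0 : ℝ) T | α t < (2 * π) ^ 2 / T ^ 2 + c ^ 2 / 4})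
    (x : ℝ → ℝ) (hx : ContDiff ℝ 2 x) (hxper : Function.Periodic x T)
    (hode : ∀ᵐ t ∂(volume : Measure ℝ),
      deriv (deriv x) t + c * deriv x t + α t * x t = 0) :
    ∀ t, x t = 0 := by
  obtain ⟨C, hC⟩ := hbdd
  by_contra! hne
  obtain ⟨r, hr⟩ := exists_zero_of_periodic_solution hT hlb hlbstrict hx hxper hode hne
  obtain ⟨a, ha, hxa⟩ := hxper.exists_mem_Ico₀ hT r
  have hcrit := ae_eq_of_periodic_solution_of_zero hT hC hub hx hxper hode hne (hxa ▸ hr)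
  have hsub := measure_pos_Ioc_of_periodic (fun t ht => by rwa [hper t]) ha hubstrict
  obtain ⟨t, ⟨ht, hlt⟩, heq⟩ :=
    Measure.exists_mem_of_measure_ne_zero_of_ae hsub.ne' (ae_restrict_of_ae hcrit)
  exact hlt.ne (heq ht)

/-- If `α` is `T`-periodic, essentially bounded, `0 ≪ α ≪ (2π)²/T² + c²/4`, then
`x'' + c x' + α x = 0` has no nontrivial `T`-periodic solution. -/
theorem stmt3 (c T : ℝ) (hT : 0 < T) (α : ℝ → ℝ) (hmeas : Measurable α)
    (hper : Function.Periodic α T)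
    (hbdd : ∃ C : ℝ, ∀ᵐ t ∂(volume : Measure ℝ), |α t| ≤ C)
    (hlb : ∀ᵐ t ∂(volume : Measure ℝ), 0 ≤ α t)
    (hlbstrict : 0 < volume {t ∈ Icc (0 : ℝ) T | 0 < α t})
    (hub : ∀ᵐ t ∂(volume : Measure ℝ), α t ≤ (2 * π) ^ 2 / T ^ 2 + c ^ 2 / 4)
    (hubstrict : 0 < volume {t ∈ Icc (0 : ℝ) T | α t < (2 * π) ^ 2 / T ^ 2 + c ^ 2 / 4})
    (x : ℝ → ℝ) (hx : ContDiff ℝ 2 x) (hxper : Function.Periodic x T)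
    (hode : ∀ᵐ t ∂(volume : Measure ℝ),
      deriv (deriv x) t + c * deriv x t + α t * x t = 0) :
    ∀ t, x t = 0 :=
  stmt3_general c T hT α hper hbdd hlb hlbstrict hub hubstrict x hx hxper hode
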